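/- Fix S > 0 and k > 0. For N > 0 define S'(N) = k²S + N if k ≤ 1 and S'(N) = k²S + N + k² − 1 if k > 1; D(N) = √((S + S' + 1)² − 4k²S(S+1)); C_E(N) = g(S) + g(S') − g((D + S' − S − 1)/2) − g((D − S' + S − 1)/2), where g(x) = (x+1)log₂(x+1) − x log₂(x) for x > 0 and g(0) = 0; and C_Shan(N) = log₂(1 + k²S/N). Then lim_{N→∞} C_E(N)/C_Shan(N) = (S+1)·ln(1 + 1/S), a limit independent of k. In particular the ratio tends to 1 as S → ∞ and to +∞ as S → 0. -/

import Mathlib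

namespace QIT

noncomputable section

open Filter

/-- Entropy (in bits) of a bosonic thermal state of mean photon number `x`:
`g(x) = (x+1)log₂(x+1) − x log₂ x`. -/
def g (x : ℝ) : ℝ := (x + 1) * Real.logb 2 (x + 1) - x * Real.logb 2 x

/-- Mean output energy of the one-mode Gaussian channel with
attenuation/amplification `k`, noise `N`, and mean input energy `S`. -/
def outEnergy (S k N : ℝ) : ℝ :=
  if k ≤ 1 then k ^ 2 * S + N else k ^ 2 * S + N + k ^ 2 - 1

/-- The quantity `D = √((S+S'+1)² − 4k²S(S+1))`. -/
def Dq (S k N : ℝ) : ℝ :=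
  Real.sqrt ((S + outEnergy S k N + 1) ^ 2 - 4 * k ^ 2 * S * (S + 1))

/-- Entanglement-assisted capacity of the one-mode Gaussian channel. -/
def CE (S k N : ℝ) : ℝ :=
  g S + g (outEnergy S k N) - g ((Dq S k N + outEnergy S k N - S - 1) / 2) -
    g ((Dq S k N - outEnergy S k N + S - 1) / 2)

/-- Shannon capacity of the classical complex Gaussian channel with received signal
power `k²S` and noise `N`. -/
def CShan (S k N : ℝ) : ℝ := Real.logb 2 (1 + k ^ 2 * S / N)

lemma hasDerivAt_g {x : ℝ} (hx : 0 < x) :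
    HasDerivAt g (Real.logb 2 (x + 1) - Real.logb 2 x) x := by
  have hx1 : (0:ℝ) < x + 1 := by linarith
  have h1 : HasDerivAt (fun y : ℝ => y + 1) 1 x := (hasDerivAt_id x).add_const 1
  have h2 : HasDerivAt (fun y : ℝ => Real.log (y + 1)) ((x+1)⁻¹ * 1) x :=
    by have := (Real.hasDerivAt_log hx1.ne').comp x h1; exact this
  have h3 : HasDerivAt (fun y : ℝ => (y+1) * Real.log (y + 1))
      (1 * Real.log (x+1) + (x+1) * ((x+1)⁻¹ * 1)) x := h1.mul h2
  have h4 : HasDerivAt (fun y : ℝ => y * Real.log y)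
      (1 * Real.log x + x * x⁻¹) x := (hasDerivAt_id x).mul (Real.hasDerivAt_log hx.ne')
  have h5 := ((h3.sub h4).div_const (Real.log 2))
  have : (fun y : ℝ => ((y+1) * Real.log (y+1) - y * Real.log y) / Real.log 2) = g := by
    funext y
    simp [g, Real.logb]
    ring
  simp only [Pi.sub_apply] at h5; rw [this] at h5
  refine h5.congr_deriv ?_
  simp only [Real.logb]
  have hl2 : (0:ℝ) < Real.log 2 := by
    positivity
  field_simp
  ring

set_option maxHeartbeats 1000000 in
/-- **High-noise asymptotics of the entanglement-assisted to Shannon capacity ratio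
for the Gaussian bosonic channel:** for fixed signal strength `S > 0` and
attenuation/amplification `k > 0`, `C_E/C_Shan → (S+1)·ln(1+1/S)` as the noise
`N → ∞` — a limit independent of `k`; moreover that limit tends to `1` as `S → ∞`
and to `+∞` as `S → 0⁺`. -/
theorem gaussian_CE_over_CShan_limit (S k : ℝ) (hS : 0 < S) (hk : 0 < k) :
    Tendsto (fun N : ℝ => CE S k N / CShan S k N) atTop
      (nhds ((S + 1) * Real.log (1 + 1 / S))) ∧
    Tendsto (fun s : ℝ => (s + 1) * Real.log (1 + 1 / s)) atTop (nhds 1) ∧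
    Tendsto (fun s : ℝ => (s + 1) * Real.log (1 + 1 / s))
      (nhdsWithin 0 (Set.Ioi 0)) atTop := by
  have hl2 : (0:ℝ) < Real.log 2 := by positivity
  refine ⟨?_, ?_, ?_⟩
  · -- PART 1
    set c : ℝ := if k ≤ 1 then 0 else k ^ 2 - 1 with hc
    have hc0 : 0 ≤ c := by
      rw [hc]; split_ifs with h
      · exact le_refl 0
      · nlinarith [not_le.mp h]
    set b : ℝ := k ^ 2 * S + c with hb
    have hb0 : 0 < b := by
      have : 0 < k ^ 2 * S := by positivity
      rw [hb]; linarith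
    set a : ℝ := S + b + 1 with ha
    have ha0 : 0 < a := by rw [ha]; linarith
    set M : ℝ := 4 * k ^ 2 * S * (S + 1) with hM
    have hM0 : 0 < M := by rw [hM]; positivity
    have hout : ∀ N : ℝ, outEnergy S k N = N + b := by
      intro N; rw [hb, hc, outEnergy]; split_ifs <;> ring
    have hDqf : ∀ N : ℝ, Dq S k N = Real.sqrt ((N + a) ^ 2 - M) := by
      intro N; rw [Dq, hout]; congr 1; rw [ha, hM]; ring
    set eps : ℝ → ℝ := fun N => (N + a - Dq S k N) / 2 with heps
    -- key eventual facts
    have key : ∀ᶠ N in (atTop : Filter ℝ), 0 < N ∧ 0 ≤ (N + a) ^ 2 - M ∧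
        0 < eps N ∧ eps N = M / (2 * (N + a + Dq S k N)) ∧ 1 ≤ N + b - eps N := by
      filter_upwards [eventually_ge_atTop (2:ℝ), eventually_ge_atTop (Real.sqrt M),
        eventually_ge_atTop M] with N h2 hsM hMN
      have hN0 : (0:ℝ) < N := by linarith
      have hsq0 : 0 ≤ Real.sqrt M := Real.sqrt_nonneg M
      have hsub : 0 ≤ (N + a) ^ 2 - M := by
        nlinarith [Real.sq_sqrt hM0.le]
      have hD0 : 0 ≤ Dq S k N := by rw [hDqf]; exact Real.sqrt_nonneg _
      have hDlt : Dq S k N < N + a := by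
        rw [hDqf]
        have h' := Real.sqrt_lt_sqrt hsub (show (N + a) ^ 2 - M < (N + a) ^ 2 by linarith)
        rwa [Real.sqrt_sq (by linarith : (0:ℝ) ≤ N + a)] at h'
      have hepsp : 0 < eps N := by rw [heps]; dsimp only; linarith
      have hD2 : Dq S k N ^ 2 = (N + a) ^ 2 - M := by rw [hDqf]; exact Real.sq_sqrt hsub
      have hden : (0:ℝ) < 2 * (N + a + Dq S k N) := by linarith
      have heq : eps N = M / (2 * (N + a + Dq S k N)) := by
        rw [heps]; dsimp only
        rw [div_eq_div_iff (by norm_num) hden.ne']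
        nlinarith [hD2]
      refine ⟨hN0, hsub, hepsp, heq, ?_⟩
      have h12 : eps N ≤ 1/2 := by
        rw [heq, div_le_div_iff₀ hden (by norm_num)]
        linarith
      linarith
    -- D/N → 1
    have htendD : Tendsto (fun N : ℝ => Dq S k N / N) atTop (nhds 1) := by
      have h1 : Tendsto (fun N : ℝ => (1 + a * N⁻¹) ^ 2 - M * (N⁻¹) ^ 2) atTop
          (nhds ((1 + a * 0) ^ 2 - M * 0 ^ 2)) :=
        ((tendsto_const_nhds.add (tendsto_inv_atTop_zero.const_mul a)).pow 2).sub
          ((tendsto_inv_atTop_zero.pow 2).const_mul M)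
      norm_num at h1
      have h2 : Tendsto (fun N : ℝ => Real.sqrt ((1 + a * N⁻¹) ^ 2 - M * (N⁻¹) ^ 2)) atTop
          (nhds 1) := by
        have h3 := (Real.continuous_sqrt.tendsto 1).comp h1
        simpa [Function.comp_def] using h3
      apply h2.congr'
      filter_upwards [key, eventually_gt_atTop (0:ℝ)] with N hN hN0
      have he : (1 + a * N⁻¹) ^ 2 - M * (N⁻¹) ^ 2 = ((N + a) ^ 2 - M) / N ^ 2 := by
        field_simp
      rw [he, Real.sqrt_div hN.2.1 (N ^ 2), Real.sqrt_sq hN0.le, hDqf]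
    -- N * eps → M/4
    have htendNeps : Tendsto (fun N : ℝ => N * eps N) atTop (nhds (M / 4)) := by
      have h1 : Tendsto (fun N : ℝ => 1 + a * N⁻¹ + Dq S k N / N) atTop (nhds 2) := by
        have h0 : Tendsto (fun N : ℝ => (1:ℝ) + a * N⁻¹) atTop (nhds (1 + a * 0)) :=
          tendsto_const_nhds.add (tendsto_inv_atTop_zero.const_mul a)
        have h0' := h0.add htendD
        norm_num at h0'
        exact h0'
      have h2 : Tendsto (fun N : ℝ => (M / 2) * (1 + a * N⁻¹ + Dq S k N / N)⁻¹) atTop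
          (nhds ((M / 2) * 2⁻¹)) := (h1.inv₀ two_ne_zero).const_mul (M / 2)
      have h3 : (M / 2) * (2:ℝ)⁻¹ = M / 4 := by ring
      rw [h3] at h2
      apply h2.congr'
      filter_upwards [key, eventually_gt_atTop (0:ℝ)] with N hN hN0
      obtain ⟨_, _, hepsp, heq, _⟩ := hN
      have hD0 : 0 ≤ Dq S k N := by rw [hDqf]; exact Real.sqrt_nonneg _
      have hden : (0:ℝ) < N + a + Dq S k N := by linarith
      rw [heq]
      have h4 : 1 + a * N⁻¹ + Dq S k N / N = (N + a + Dq S k N) / N := by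
        field_simp
      rw [h4, inv_div]
      field_simp
    -- eps → 0
    have hteps0 : Tendsto eps atTop (nhds 0) := by
      have h1 := htendNeps.mul tendsto_inv_atTop_zero
      rw [mul_zero] at h1
      apply h1.congr'
      filter_upwards [eventually_gt_atTop (0:ℝ)] with N hN0
      field_simp
    -- difference quotient at S
    have hslope : Tendsto (fun N : ℝ => (g S - g (S - eps N)) / eps N) atTop
        (nhds (Real.logb 2 (S + 1) - Real.logb 2 S)) := by
      have hd := hasDerivAt_g hS
      rw [hasDerivAt_iff_tendsto_slope] at hd
      have hcomp : Tendsto (fun N : ℝ => S - eps N) atTop (nhdsWithin S {S}ᶜ) := by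
        apply tendsto_nhdsWithin_of_tendsto_nhds_of_eventually_within
        · have h6 : Tendsto (fun N : ℝ => S - eps N) atTop (nhds (S - 0)) :=
            tendsto_const_nhds.sub hteps0
          rw [sub_zero] at h6
          exact h6
        · filter_upwards [key] with N hN
          have hepsp := hN.2.2.1
          simp only [Set.mem_compl_iff, Set.mem_singleton_iff]
          intro h
          have : eps N = 0 := by linarith
          linarith
      have h1 := hd.comp hcomp
      apply h1.congr'
      filter_upwards [key] with N hN
      have hepsp := hN.2.2.1
      simp only [Function.comp_apply, slope_def_field]
      rw [show S - eps N - S = -eps N by ring, div_neg, ← neg_div, neg_sub]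
    -- term 1
    have hterm1 : Tendsto (fun N : ℝ => N * (g S - g (S - eps N))) atTop
        (nhds ((M / 4) * (Real.logb 2 (S + 1) - Real.logb 2 S))) := by
      have h1 := htendNeps.mul hslope
      apply h1.congr'
      filter_upwards [key] with N hN
      have hepsp := hN.2.2.1
      field_simp
    -- term 2
    have hSe : Tendsto (fun N : ℝ => N + b - eps N) atTop atTop := by
      have h1 : Tendsto (fun N : ℝ => N + b) atTop atTop :=
        tendsto_atTop_add_const_right atTop b tendsto_id
      have h2 := h1.atTop_add (hteps0.neg)
      simpa [sub_eq_add_neg] using h2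
    have hup : Tendsto (fun N : ℝ => (N * eps N) * (((N + b - eps N) * Real.log 2)⁻¹)) atTop
        (nhds 0) := by
      have hdenom : Tendsto (fun N : ℝ => (N + b - eps N) * Real.log 2) atTop atTop :=
        hSe.atTop_mul_const hl2
      have h1 := htendNeps.mul hdenom.inv_tendsto_atTop
      rw [mul_zero] at h1
      exact h1
    have hterm2 : Tendsto (fun N : ℝ => N * (g (N + b) - g (N + b - eps N))) atTop (nhds 0) := by
      apply tendsto_of_tendsto_of_tendsto_of_le_of_le' tendsto_const_nhds hup
      · filter_upwards [key, eventually_gt_atTop (0:ℝ)] with N hN hN0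
        obtain ⟨_, _, hepsp, _, h1u⟩ := hN
        obtain ⟨x, hx, hxeq⟩ := exists_hasDerivAt_eq_slope g
          (fun y => Real.logb 2 (y + 1) - Real.logb 2 y)
          (show N + b - eps N < N + b by linarith)
          (fun y hy => (hasDerivAt_g (by
            have h6 := hy.1; simp only [Set.mem_Icc] at hy; linarith [hy.1])).continuousAt.continuousWithinAt)
          (fun y hy => hasDerivAt_g (by linarith [hy.1]))
        have hx0 : (0:ℝ) < x := by have := hx.1; linarith
        have hne : eps N ≠ 0 := hepsp.ne'
        rw [show N + b - (N + b - eps N) = eps N by ring] at hxeq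
        have hval : g (N + b) - g (N + b - eps N)
            = (Real.logb 2 (x + 1) - Real.logb 2 x) * eps N := ((eq_div_iff hne).mp hxeq).symm
        have hf0 : 0 ≤ Real.logb 2 (x + 1) - Real.logb 2 x := by
          have := Real.logb_le_logb_of_le (b := 2) (by norm_num) hx0 (by linarith : x ≤ x + 1)
          linarith
        rw [hval]
        exact mul_nonneg hN0.le (mul_nonneg hf0 hepsp.le)
      · filter_upwards [key, eventually_gt_atTop (0:ℝ)] with N hN hN0
        obtain ⟨_, _, hepsp, _, h1u⟩ := hN
        obtain ⟨x, hx, hxeq⟩ := exists_hasDerivAt_eq_slope g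
          (fun y => Real.logb 2 (y + 1) - Real.logb 2 y)
          (show N + b - eps N < N + b by linarith)
          (fun y hy => (hasDerivAt_g (by
            have h6 := hy.1; simp only [Set.mem_Icc] at hy; linarith [hy.1])).continuousAt.continuousWithinAt)
          (fun y hy => hasDerivAt_g (by linarith [hy.1]))
        have hxlow : N + b - eps N < x := hx.1
        have hx0 : (0:ℝ) < x := by linarith
        have hne : eps N ≠ 0 := hepsp.ne'
        rw [show N + b - (N + b - eps N) = eps N by ring] at hxeq
        have hval : g (N + b) - g (N + b - eps N)
            = (Real.logb 2 (x + 1) - Real.logb 2 x) * eps N := ((eq_div_iff hne).mp hxeq).symm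
        -- bound the derivative
        have e1 : Real.logb 2 (x + 1) - Real.logb 2 x = Real.log ((x + 1) / x) / Real.log 2 := by
          rw [Real.log_div (by linarith) hx0.ne', Real.logb, Real.logb]
          ring
        have e2 : Real.log ((x + 1) / x) ≤ 1 / x := by
          have h3 := Real.log_le_sub_one_of_pos (show (0:ℝ) < (x + 1) / x by positivity)
          have h4 : (x + 1) / x - 1 = 1 / x := by field_simp; ring
          linarith [h4 ▸ h3]
        have e3 : Real.logb 2 (x + 1) - Real.logb 2 x ≤ ((N + b - eps N) * Real.log 2)⁻¹ := by
          rw [e1]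
          have h5 : Real.log ((x + 1) / x) / Real.log 2 ≤ (1 / x) / Real.log 2 := by
            gcongr
          apply h5.trans
          rw [div_div, ← one_div]
          apply one_div_le_one_div_of_le
          · positivity
          · have : N + b - eps N ≤ x := hxlow.le
            nlinarith
        rw [hval]
        have hNe : 0 < N * eps N := mul_pos hN0 hepsp
        calc N * ((Real.logb 2 (x + 1) - Real.logb 2 x) * eps N)
            = (N * eps N) * (Real.logb 2 (x + 1) - Real.logb 2 x) := by ring
          _ ≤ (N * eps N) * (((N + b - eps N) * Real.log 2)⁻¹) := by
              exact mul_le_mul_of_nonneg_left e3 hNe.le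
    -- N * CE
    have hCEeq : ∀ᶠ N in (atTop : Filter ℝ), N * CE S k N
        = N * (g S - g (S - eps N)) + N * (g (N + b) - g (N + b - eps N)) := by
      filter_upwards with N
      rw [CE, hout]
      have h1 : (Dq S k N + (N + b) - S - 1) / 2 = (N + b) - eps N := by
        rw [heps]; dsimp only; rw [ha]; ring
      have h2 : (Dq S k N - (N + b) + S - 1) / 2 = S - eps N := by
        rw [heps]; dsimp only; rw [ha]; ring
      rw [h1, h2]
      ring
    have hNCE : Tendsto (fun N : ℝ => N * CE S k N) atTop
        (nhds ((M / 4) * (Real.logb 2 (S + 1) - Real.logb 2 S))) := by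
      have h1 := hterm1.add hterm2
      rw [add_zero] at h1
      exact h1.congr' (EventuallyEq.symm hCEeq)
    -- N * CShan
    have hNCS : Tendsto (fun N : ℝ => N * CShan S k N) atTop
        (nhds (k ^ 2 * S / Real.log 2)) := by
      have h1 := (Real.tendsto_mul_log_one_add_div_atTop (k ^ 2 * S)).div_const (Real.log 2)
      apply h1.congr
      intro N
      rw [CShan, Real.logb]
      ring
    -- combine
    have hden_ne : k ^ 2 * S / Real.log 2 ≠ 0 := by positivity
    have hfin := hNCE.div hNCS hden_ne
    have hval : (M / 4) * (Real.logb 2 (S + 1) - Real.logb 2 S) / (k ^ 2 * S / Real.log 2)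
        = (S + 1) * Real.log (1 + 1 / S) := by
      rw [hM, Real.logb, Real.logb, show (1:ℝ) + 1 / S = (S + 1) / S by field_simp,
        Real.log_div (by linarith) hS.ne']
      field_simp
    rw [hval] at hfin
    apply hfin.congr'
    filter_upwards [eventually_gt_atTop (0:ℝ)] with N hN0
    simp only [Pi.div_apply]
    rw [mul_div_mul_left _ _ hN0.ne']
  · -- PART 2
    have h1 := Real.tendsto_mul_log_one_add_div_atTop 1
    have h2 : Tendsto (fun s : ℝ => Real.log (1 + 1 / s)) atTop (nhds 0) := by
      have h3 : Tendsto (fun s : ℝ => 1 + 1 / s) atTop (nhds 1) := by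
        have h6 : Tendsto (fun s : ℝ => (1:ℝ) + s⁻¹) atTop (nhds (1 + 0)) :=
          tendsto_const_nhds.add tendsto_inv_atTop_zero
        rw [add_zero] at h6
        simpa [one_div] using h6
      have h4 := ((Real.continuousAt_log one_ne_zero).tendsto).comp h3
      simpa [Function.comp_def] using h4
    have h5 := h1.add h2
    rw [add_zero] at h5
    apply h5.congr
    intro s
    ring
  · -- PART 3
    have h1 : Tendsto (fun s : ℝ => s + 1) (nhdsWithin 0 (Set.Ioi 0)) (nhds 1) := by
      have h2 : Tendsto (fun s : ℝ => s + 1) (nhds (0:ℝ)) (nhds (0 + 1)) :=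
        (continuous_id.add continuous_const).tendsto 0
      rw [zero_add] at h2
      exact h2.mono_left nhdsWithin_le_nhds
    have h2 : Tendsto (fun s : ℝ => Real.log (1 + 1 / s)) (nhdsWithin 0 (Set.Ioi 0)) atTop := by
      have h3 : Tendsto (fun s : ℝ => (1:ℝ) + 1 / s) (nhdsWithin 0 (Set.Ioi 0)) atTop := by
        have h4 := tendsto_inv_nhdsGT_zero (𝕜 := ℝ)
        have h5 := tendsto_atTop_add_const_left (nhdsWithin (0:ℝ) (Set.Ioi 0)) 1 h4
        simpa [one_div] using h5
      exact Real.tendsto_log_atTop.comp h3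
    exact Tendsto.pos_mul_atTop one_pos h1 h2

end

end QIT
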